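/- arXiv:1705.01441 — 3 statements merged into one kernel-verified Lean document; each statement's English description precedes it below -/
import Mathlib

section
/- If x : ℝ → ℝ satisfies x''(t) + f(t)x(t) = 0 where f is continuous with f(t) < 0 for all t, and x is not identically zero with x(0)x'(0) ≥ 0, then x is unbounded on [0,∞). -/
theorem stmt_4 (f x : ℝ → ℝ) (hf : Continuous f) (hfneg : ∀ t, f t < 0)
    (hx : ∀ t, HasDerivAt x (deriv x t) t)
    (hx' : ∀ t, HasDerivAt (deriv x) (-(f t) * x t) t)
    (h0 : x 0 ≠ 0 ∨ deriv x 0 ≠ 0)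
    (hsign : x 0 * deriv x 0 ≥ 0) :
    ¬ BddAbove (Set.range fun t : {t : ℝ // 0 ≤ t} => |x t.1|) := by
  -- W = x * x'
  have hWd : ∀ t, HasDerivAt (fun t => x t * deriv x t)
      (deriv x t * deriv x t + x t * (-(f t) * x t)) t := fun t => (hx t).mul (hx' t)
  have hWd0 : ∀ t, 0 ≤ deriv x t * deriv x t + x t * (-(f t) * x t) := by
    intro t
    have h1 : 0 ≤ (-(f t)) * (x t * x t) :=
      mul_nonneg (by linarith [hfneg t]) (mul_self_nonneg _)
    nlinarith [mul_self_nonneg (deriv x t)]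
  have hWmono : Monotone (fun t => x t * deriv x t) := by
    apply monotone_of_deriv_nonneg (fun t => (hWd t).differentiableAt)
    intro t
    rw [(hWd t).deriv]
    exact hWd0 t
  have hd0 : 0 < deriv x 0 * deriv x 0 + x 0 * (-(f 0) * x 0) := by
    rcases h0 with h | h
    · have h1 : 0 < (-(f 0)) * (x 0 * x 0) :=
        mul_pos (by linarith [hfneg 0]) (mul_self_pos.mpr h)
      nlinarith [mul_self_nonneg (deriv x 0)]
    · have h1 : 0 < deriv x 0 * deriv x 0 := mul_self_pos.mpr h
      have h2 : 0 ≤ (-(f 0)) * (x 0 * x 0) :=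
        mul_nonneg (by linarith [hfneg 0]) (mul_self_nonneg _)
      nlinarith
  -- find t2 > 0 with W t2 > W 0
  obtain ⟨t2, ht2pos, hWt2⟩ : ∃ t2, 0 < t2 ∧ x 0 * deriv x 0 < x t2 * deriv x t2 := by
    have hs := hasDerivAt_iff_tendsto_slope.1 (hWd 0)
    have hev : ∀ᶠ t in nhdsWithin (0:ℝ) {(0:ℝ)}ᶜ,
        0 < slope (fun t => x t * deriv x t) 0 t :=
      hs.eventually (eventually_gt_nhds hd0)
    have hmono : nhdsWithin (0:ℝ) (Set.Ioi 0) ≤ nhdsWithin (0:ℝ) {(0:ℝ)}ᶜ :=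
      nhdsWithin_mono 0 (fun t ht => ne_of_gt ht)
    obtain ⟨t, hslope, htpos⟩ :=
      ((hev.filter_mono hmono).and self_mem_nhdsWithin).exists
    refine ⟨t, htpos, ?_⟩
    rw [slope_def_field] at hslope
    have htpos' : (0:ℝ) < t := htpos
    rcases div_pos_iff.1 hslope with ⟨h1, _⟩ | ⟨_, h2⟩
    · linarith
    · linarith
  have hc : 0 < x t2 * deriv x t2 := lt_of_le_of_lt hsign hWt2
  set c : ℝ := x t2 * deriv x t2 with hcdef
  -- key growth estimate
  have key : ∀ u, t2 ≤ u → x t2 ^ 2 - 2 * c * t2 ≤ x u ^ 2 - 2 * c * u := by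
    have hxc : Continuous x := continuous_iff_continuousAt.2 fun t => (hx t).continuousAt
    have hH : ∀ u, HasDerivAt (fun t => x t ^ 2 - 2 * c * t)
        ((2:ℕ) * x u ^ 1 * deriv x u - 2 * c * 1) u := by
      intro u
      exact ((hx u).pow 2).sub ((hasDerivAt_id u).const_mul (2 * c))
    have hmono : MonotoneOn (fun t => x t ^ 2 - 2 * c * t) (Set.Ici t2) := by
      apply monotoneOn_of_deriv_nonneg (convex_Ici t2)
      · exact ((hxc.pow 2).sub (continuous_const.mul continuous_id)).continuousOn
      · intro u hu
        exact ((hH u).differentiableAt).differentiableWithinAt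
      · intro u hu
        rw [(hH u).deriv]
        rw [interior_Ici] at hu
        have h1 := hWmono (le_of_lt hu)
        simp only at h1
        simp only [pow_one, Nat.cast_ofNat, mul_one]
        nlinarith
    intro u hu
    exact hmono (Set.self_mem_Ici) hu hu
  intro hB
  obtain ⟨M, hM⟩ := hB
  have hbound : ∀ t : ℝ, 0 ≤ t → |x t| ≤ M := fun t ht => hM ⟨⟨t, ht⟩, rfl⟩
  set T : ℝ := t2 + (M ^ 2 + 1) / (2 * c) with hTdef
  have hT2 : t2 ≤ T := by
    have : 0 ≤ (M ^ 2 + 1) / (2 * c) :=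
      div_nonneg (by nlinarith [sq_nonneg M]) (by linarith)
    rw [hTdef]; linarith
  have hT0 : 0 ≤ T := le_trans ht2pos.le hT2
  have h1 := key T hT2
  have h2 : x T ^ 2 ≤ M ^ 2 := by
    have hb := hbound T hT0
    have h3 : |x T| ^ 2 ≤ M ^ 2 := pow_le_pow_left₀ (abs_nonneg _) hb 2
    rwa [sq_abs] at h3
  have h3 : 2 * c * (T - t2) = M ^ 2 + 1 := by
    rw [hTdef]
    field_simp
    ring
  nlinarith [sq_nonneg (x t2)]
end

section
/- Let f, g : ℝ → ℝ be differentiable with f(0) = g(0) = 0, and let α β : ℝ, γ := Complex.sqrt(4α+β²) ≠ 0. Define Φ(t) = exp(f(t) + (β/2)g(t)) · Q(t) where Q(t) = !![cosh(γg(t)/2) - (β/γ)sinh(γg(t)/2), (2/γ)sinh(γg(t)/2); (2α/γ)sinh(γg(t)/2), cosh(γg(t)/2) + (β/γ)sinh(γg(t)/2)]. Then Φ'(t) = A(t)Φ(t) and Φ(0) = I, where A(t) = !![f'(t), g'(t); α g'(t), f'(t) + β g'(t)]. -/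
/-!
With `N = !![-β, 2; 2α, β]` one has `N * N = γ² • 1`, so `Q t` is `exp ((g t / 2) • N)` written out
through `cosh` and `sinh`, and `A t = (f' + β g' / 2) • 1 + (g' / 2) • N`. Hence `Φ` is
`exp (f + β g / 2) • exp ((g / 2) • N)`, which solves `Φ' = A Φ`. The only computation is that
`z ↦ cosh (γ z / 2) • 1 + γ⁻¹ sinh (γ z / 2) • N` has derivative `(1 / 2) • N` times itself, which
is exactly where `N * N = γ² • 1` enters.
-/

open scoped Matrix.Norms.Elementwise

variable {n : Type*} [Fintype n] [DecidableEq n]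

noncomputable def coshSinhMatrix (γ : ℂ) (N : Matrix n n ℂ) (z : ℂ) : Matrix n n ℂ :=
  Complex.cosh (γ * z / 2) • 1 + (Complex.sinh (γ * z / 2) / γ) • N

theorem mul_coshSinhMatrix {γ : ℂ} (hγ : γ ≠ 0) {N : Matrix n n ℂ} (hN : N * N = γ ^ 2 • 1)
    (z : ℂ) :
    N * coshSinhMatrix γ N z =
      (γ * Complex.sinh (γ * z / 2)) • 1 + Complex.cosh (γ * z / 2) • N := by
  rw [coshSinhMatrix, mul_add, mul_smul_comm, mul_smul_comm, mul_one, hN, smul_smul, add_comm]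
  congr 2
  field_simp

theorem hasDerivAt_coshSinhMatrix {γ : ℂ} (hγ : γ ≠ 0) {N : Matrix n n ℂ}
    (hN : N * N = γ ^ 2 • 1) (z : ℂ) :
    HasDerivAt (coshSinhMatrix γ N) ((1 / 2 : ℂ) • (N * coshSinhMatrix γ N z)) z := by
  have hlin : HasDerivAt (fun w : ℂ => γ * w / 2) (γ / 2) z := by
    simpa using ((hasDerivAt_id z).const_mul γ).div_const 2
  have hcosh := (Complex.hasDerivAt_cosh _).comp z hlin
  have hsinh := ((Complex.hasDerivAt_sinh _).comp z hlin).div_const γ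
  refine ((hcosh.smul_const (1 : Matrix n n ℂ)).add (hsinh.smul_const N)).congr_deriv ?_
  rw [mul_coshSinhMatrix hγ hN, smul_add, smul_smul, smul_smul]
  congr 2 <;> field_simp

theorem hasDerivAt_cexp_smul_coshSinhMatrix {γ : ℂ} (hγ : γ ≠ 0) {N : Matrix n n ℂ}
    (hN : N * N = γ ^ 2 • 1) {u h : ℝ → ℂ} {u' h' : ℂ} {t : ℝ}
    (hu : HasDerivAt u u' t) (hh : HasDerivAt h h' t) :
    HasDerivAt (fun s => Complex.exp (u s) • coshSinhMatrix γ N (h s))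
      ((u' • 1 + (h' / 2) • N) * (Complex.exp (u t) • coshSinhMatrix γ N (h t))) t := by
  refine (hu.cexp.smul ((hasDerivAt_coshSinhMatrix hγ hN (h t)).scomp t hh)).congr_deriv ?_
  simp only [Function.comp_apply, add_mul, smul_mul_assoc, one_mul, mul_smul_comm, smul_smul]
  module

theorem stmt_10 (f g : ℝ → ℝ) (hf : Differentiable ℝ f) (hg : Differentiable ℝ g)
    (hf0 : f 0 = 0) (hg0 : g 0 = 0) (α β : ℝ) (γ : ℂ)
    (hγ : γ ^ 2 = (4*α + β^2 : ℂ)) (hγ0 : γ ≠ 0)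
    (A Q Φ : ℝ → Matrix (Fin 2) (Fin 2) ℂ)
    (hA : ∀ t, A t = !![((deriv f t : ℝ) : ℂ), ((deriv g t : ℝ) : ℂ);
        (α : ℂ) * ((deriv g t : ℝ) : ℂ), ((deriv f t : ℝ) : ℂ) + (β : ℂ) * ((deriv g t : ℝ) : ℂ)])
    (hQ : ∀ t, Q t = !![Complex.cosh (γ * (g t) / 2) - (β / γ) * Complex.sinh (γ * (g t) / 2),
        (2 / γ) * Complex.sinh (γ * (g t) / 2);
        (2 * α / γ) * Complex.sinh (γ * (g t) / 2),
        Complex.cosh (γ * (g t) / 2) + (β / γ) * Complex.sinh (γ * (g t) / 2)])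
    (hΦ : ∀ t, Φ t = Complex.exp ((f t : ℂ) + (β / 2) * (g t : ℂ)) • Q t) :
    (∀ t i j, HasDerivAt (fun s => Φ s i j) ((A t * Φ t) i j) t) ∧ Φ 0 = 1 := by
  set N : Matrix (Fin 2) (Fin 2) ℂ := !![-(β : ℂ), 2; 2 * α, β]
  have hN : N * N = γ ^ 2 • 1 := by
    ext i j; fin_cases i <;> fin_cases j <;> simp [N, hγ] <;> ring
  have hQN : ∀ t, Q t = coshSinhMatrix γ N (g t) := fun t => by
    ext i j; fin_cases i <;> fin_cases j <;> simp [hQ, N, coshSinhMatrix] <;> ring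
  have hAN : ∀ t,
      A t = (((deriv f t : ℝ) : ℂ) + β / 2 * ((deriv g t : ℝ) : ℂ)) • 1
        + (((deriv g t : ℝ) : ℂ) / 2) • N :=
    fun t => by
      ext i j; fin_cases i <;> fin_cases j <;> simp [hA, N] <;> ring
  refine ⟨fun t => ?_, ?_⟩
  · have hu : HasDerivAt (fun s => (f s : ℂ) + (β / 2) * (g s : ℂ))
        (((deriv f t : ℝ) : ℂ) + β / 2 * ((deriv g t : ℝ) : ℂ)) t :=
      (hf t).hasDerivAt.ofReal_comp.add ((hg t).hasDerivAt.ofReal_comp.const_mul _)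
    have hΦ' := hasDerivAt_cexp_smul_coshSinhMatrix hγ0 hN hu (hg t).hasDerivAt.ofReal_comp
    simp only [← hQN, ← hΦ, ← hAN] at hΦ'
    exact fun i j => hasDerivAt_pi.1 (hasDerivAt_pi.1 hΦ' i) j
  · rw [hΦ, hQN, hf0, hg0]
    simp [coshSinhMatrix]
end

section
/- The function x₂(t) = e^{t/2}cos(t) is a solution of the Marcus–Yamabe equation (8 − 6 sin 2t)x'' + (4 + 12 cos 2t − 3 sin 2t)x' + (−5 + 3 cos 2t + 9 sin 2t)x = 0; in particular this equation has an unbounded solution even though both Floquet-type exponents of the associated system have eigenvalue real parts negative. -/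
/-!
Functions `exp (a t) (p cos t + q sin t)` are closed under differentiation, so `x₂'` and `x₂''`
are explicit and the equation reduces to a trigonometric identity. Along `t = 2πn` we have
`x₂ t = exp (πn)`, which is unbounded.
-/

open Real Set Filter

theorem hasDerivAt_exp_mul_trig (a p q t : ℝ) :
    HasDerivAt (fun t => exp (a * t) * (p * cos t + q * sin t))
      (exp (a * t) * ((a * p + q) * cos t + (a * q - p) * sin t)) t := by
  have hexp : HasDerivAt (fun t => exp (a * t)) (exp (a * t) * a) t :=
    ((hasDerivAt_id t).const_mul a).exp.congr_deriv (by simp)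
  have htrig : HasDerivAt (fun t => p * cos t + q * sin t) (p * -sin t + q * cos t) t :=
    ((hasDerivAt_cos t).const_mul p).add ((hasDerivAt_sin t).const_mul q)
  exact (hexp.mul htrig).congr_deriv (by ring)

theorem deriv_exp_mul_trig (a p q : ℝ) :
    deriv (fun t => exp (a * t) * (p * cos t + q * sin t))
      = fun t => exp (a * t) * ((a * p + q) * cos t + (a * q - p) * sin t) :=
  funext fun t => (hasDerivAt_exp_mul_trig a p q t).deriv

theorem not_bddAbove_abs_exp_mul_cos {a : ℝ} (ha : 0 < a) :
    ¬BddAbove ((fun t => |exp (a * t) * cos t|) '' Ici 0) := by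
  have htendsto : Tendsto (fun n : ℕ => exp (a * (2 * π * n))) atTop atTop :=
    tendsto_exp_atTop.comp <| Tendsto.const_mul_atTop ha <|
      tendsto_natCast_atTop_atTop.const_mul_atTop (by positivity)
  intro hbdd
  refine not_bddAbove_of_tendsto_atTop htendsto (hbdd.mono ?_)
  rintro _ ⟨n, rfl⟩
  refine ⟨2 * π * n, mem_Ici.2 (by positivity), ?_⟩
  simp [mul_comm (2 * π), cos_nat_mul_two_pi]

theorem stmt_15 (x₂ : ℝ → ℝ) (hx₂ : ∀ t, x₂ t = Real.exp (t/2) * Real.cos t) :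
    (∀ t, (8 - 6 * Real.sin (2*t)) * (deriv (deriv x₂) t)
      + (4 + 12 * Real.cos (2*t) - 3 * Real.sin (2*t)) * (deriv x₂ t)
      + (-5 + 3 * Real.cos (2*t) + 9 * Real.sin (2*t)) * x₂ t = 0) ∧
    ¬ BddAbove ((fun t => |x₂ t|) '' Set.Ici (0:ℝ)) := by
  have hx : x₂ = fun t => exp (1 / 2 * t) * (1 * cos t + 0 * sin t) := by
    funext t
    rw [hx₂]
    ring_nf
  constructor
  · intro t
    simp only [hx, deriv_exp_mul_trig, sin_two_mul, cos_two_mul']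
    linear_combination (exp (1 / 2 * t) * (12 * sin t + 9 * cos t)) * sin_sq_add_cos_sq t
  · convert not_bddAbove_abs_exp_mul_cos (one_half_pos (α := ℝ)) using 3 with t
    simp [hx]
end
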